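/- ExEquiv lemma (simplified): for the event-free ictree fragment with up-to-tau equivalence ≈ and the inductive transition relation (step (Tau t) t' if step t t'; step (Ret x) terminates with value x), if s ≈ t and s makes a transition recording outcome o, then t makes a transition recording the same outcome o, reaching a tree t' with s' ≈ t' (when the outcome is a continuation). -/
import Mathlib

/-- Labelled transition relation for the simplified (event-free) ictree
fragment (Mathlib's `Computation`, with `pure` as `Ret` and `think` as `Tau`):
inductively close over `Tau` nodes; `Ret x` makes a transition recording the
outcome `x` and becomes the stuck tree. -/
inductive Step {X : Type*} : Computation X → X → Computation X → Prop
  | tau {t : Computation X} {o : X} {t' : Computation X} :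
      Step t o t' → Step (Computation.think t) o t'
  | ret (x : X) : Step (Computation.pure x) x (Computation.empty X)

theorem step_mem {X : Type*} {s : Computation X} {o : X} {s' : Computation X}
    (h : Step s o s') : o ∈ s ∧ s' = Computation.empty X := by
  induction h with
  | tau _ ih => exact ⟨Computation.think_mem ih.1, ih.2⟩
  | ret x => exact ⟨Computation.ret_mem x, rfl⟩

theorem step_thinkN {X : Type*} (o : X) (n : ℕ) :
    Step (Computation.thinkN (Computation.pure o) n) o (Computation.empty X) := by
  induction n with
  | zero => exact Step.ret o
  | succ n ih => exact Step.tau ih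

/-- ExEquiv (simplified): up-to-tau equivalent trees have matching transitions
with the same recorded outcome, reaching up-to-tau equivalent trees. -/
theorem exEquiv {X : Type*} (s t : Computation X) (o : X) (s' : Computation X)
    (hequiv : Computation.Equiv s t) (hstep : Step s o s') :
    ∃ t' : Computation X, Step t o t' ∧ Computation.Equiv s' t' := by
  obtain ⟨hmem, rfl⟩ := step_mem hstep
  have ht : o ∈ t := (hequiv o).1 hmem
  obtain ⟨n, hr⟩ := Computation.exists_results_of_mem ht
  refine ⟨Computation.empty X, ?_, Computation.Equiv.refl _⟩
  rw [Computation.eq_thinkN hr]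
  exact step_thinkN o n
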